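/- Let G be a finite simple graph, x a vertex of G, and A a dominating set of G. Then A ∩ N[x] is nonempty, and consequently if x is C3-free with X = N[x] and A = A1 ∪ A2 is a separable γ-set of G effective under a permutation π fixing V(G) − X pointwise, moving every vertex of X, and having no 2-cycles inside X, then |A ∩ X| is exactly 1 or 2. -/

import Mathlib

/-!
Exchange argument. Since `x` dominates `X = N[x]`, replacing `A ∩ X` by `x` and the part
`A1 ∩ X` of the dominating half keeps the set dominating, and so does replacing it by `x` and
`π(A2 ∩ X)`, because `π` preserves `X` and fixes the rest. Minimality of `|A| = γ` gives
`|A ∩ X| ≤ |A1 ∩ X| + 1` and `|A ∩ X| ≤ |A2 ∩ X| + 1`; adding them yields `|A ∩ X| ≤ 2`.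
-/

open SimpleGraph

variable {V : Type*}

/-- `D` is a dominating set of `G`: every vertex is in `D` or adjacent to a vertex of `D`. -/
def IsDomSet (G : SimpleGraph V) (D : Set V) : Prop :=
  ∀ v : V, ∃ d ∈ D, d = v ∨ G.Adj d v

/-- The domination number of `G`: minimum cardinality of a dominating set. -/
noncomputable def domNum (G : SimpleGraph V) : ℕ :=
  sInf {n | ∃ D : Set V, IsDomSet G D ∧ D.ncard = n}

/-- The prism `πG` of `G`: two disjoint copies of `G` together with the matching
`{u (π u) : u ∈ V(G)}`, the second copy playing the role of `G'`. -/
def prism (G : SimpleGraph V) (π : Equiv.Perm V) : SimpleGraph (V ⊕ V) where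
  Adj a b :=
    match a, b with
    | Sum.inl u, Sum.inl v => G.Adj u v
    | Sum.inr u, Sum.inr v => G.Adj u v
    | Sum.inl u, Sum.inr v => π u = v
    | Sum.inr u, Sum.inl v => π v = u
  symm := ⟨by
    rintro (u | u) (v | v) h
    · exact G.adj_symm h
    · exact h
    · exact h
    · exact G.adj_symm h⟩
  loopless := ⟨by
    rintro (u | u) h
    · exact G.irrefl h
    · exact G.irrefl h⟩

/-- The closed neighborhood `N[v]` of a vertex. -/
def closedNbhd (G : SimpleGraph V) (v : V) : Set V :=
  insert v (G.neighborSet v)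

/-- `x` is a `C₃`-free vertex: non-isolated and belonging to no triangle of `G`. -/
def C3Free (G : SimpleGraph V) (x : V) : Prop :=
  (∃ y, G.Adj x y) ∧ ∀ u v : V, G.Adj x u → G.Adj x v → ¬ G.Adj u v

/-- `A = A1 ∪ A2` is a separable γ-set of `G` (an `A1`-γ-set): `A1, A2` are nonempty,
disjoint, `A` is a γ-set, and `A1` dominates `V(G) - A`. -/
def SepGammaSet (G : SimpleGraph V) (A1 A2 : Set V) : Prop :=
  A1.Nonempty ∧ A2.Nonempty ∧ Disjoint A1 A2 ∧
  IsDomSet G (A1 ∪ A2) ∧ (A1 ∪ A2).ncard = domNum G ∧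
  ∀ v ∉ A1 ∪ A2, ∃ u ∈ A1, G.Adj u v

/-- The separable γ-set `A = A1 ∪ A2` is effective under `π`: `π(A)` is a γ-set of the
copy `G'` of `G` (identified with `G`) whose dominating part is `B2' = π(A2)`,
i.e. `π(A2)` dominates `V(G') - π(A)`. -/
def Effective (G : SimpleGraph V) (π : Equiv.Perm V) (A1 A2 : Set V) : Prop :=
  IsDomSet G (⇑π '' (A1 ∪ A2)) ∧ (⇑π '' (A1 ∪ A2)).ncard = domNum G ∧
  ∀ v ∉ ⇑π '' (A1 ∪ A2), ∃ u ∈ ⇑π '' A2, G.Adj u v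

/-- The star `K_{1,m}` on `Fin (m+1)`, with center `0` adjacent to the `m` leaves. -/
def starGraph (m : ℕ) : SimpleGraph (Fin (m + 1)) where
  Adj a b := (a = 0 ∧ b ≠ 0) ∨ (b = 0 ∧ a ≠ 0)
  symm := ⟨fun a b h => Or.symm h⟩
  loopless := ⟨fun a h => by rcases h with ⟨h1, h2⟩ | ⟨h1, h2⟩ <;> exact h2 h1⟩

lemma domNum_le_ncard {G : SimpleGraph V} {D : Set V} (h : IsDomSet G D) :
    domNum G ≤ D.ncard :=
  Nat.sInf_le ⟨D, h, rfl⟩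

lemma IsDomSet.inter_closedNbhd_nonempty {G : SimpleGraph V} {D : Set V} (h : IsDomSet G D)
    (x : V) : (D ∩ closedNbhd G x).Nonempty := by
  obtain ⟨d, hd, rfl | hdx⟩ := h x
  · exact ⟨d, hd, Set.mem_insert d _⟩
  · exact ⟨d, hd, Set.mem_insert_of_mem x hdx.symm⟩

lemma Equiv.Perm.apply_mem_of_forall_notMem_fixed {s : Set V} {π : Equiv.Perm V}
    (hfix : ∀ w ∉ s, π w = w) {a : V} (ha : a ∈ s) : π a ∈ s := by
  by_contra h
  rw [π.injective (hfix _ h)] at h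
  exact h ha

lemma image_subset_image_inter_union_diff {s t : Set V} {f : V → V} (hfix : ∀ w ∉ s, f w = w) :
    f '' t ⊆ f '' (t ∩ s) ∪ t \ s := by
  rintro _ ⟨b, hb, rfl⟩
  by_cases hbs : b ∈ s
  · exact Or.inl ⟨b, ⟨hb, hbs⟩, rfl⟩
  · rw [hfix b hbs]
    exact Or.inr ⟨hb, hbs⟩

lemma isDomSet_insert_diff_union {G : SimpleGraph V} {x : V} {A T : Set V}
    (h : ∀ v ∉ A, v ∉ closedNbhd G x → ∃ u ∈ A \ closedNbhd G x ∪ T, G.Adj u v) :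
    IsDomSet G (insert x (A \ closedNbhd G x ∪ T)) := by
  intro v
  by_cases hvX : v ∈ closedNbhd G x
  · rcases hvX with rfl | hxv
    · exact ⟨v, Set.mem_insert v _, Or.inl rfl⟩
    · exact ⟨x, Set.mem_insert x _, Or.inr hxv⟩
  by_cases hvA : v ∈ A
  · exact ⟨v, Set.mem_insert_of_mem x (Or.inl ⟨hvA, hvX⟩), Or.inl rfl⟩
  obtain ⟨u, hu, huv⟩ := h v hvA hvX
  exact ⟨u, Set.mem_insert_of_mem x hu, Or.inr huv⟩

lemma ncard_inter_le_of_isDomSet_insert {G : SimpleGraph V} {x : V} {A s T : Set V}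
    (hfin : A.Finite) (hA : A.ncard = domNum G) (hD : IsDomSet G (insert x (A \ s ∪ T))) :
    (A ∩ s).ncard ≤ T.ncard + 1 := by
  have hsplit : (A ∩ s).ncard + (A \ s).ncard = A.ncard := Set.ncard_inter_add_ncard_sdiff_eq_ncard A s hfin
  have := domNum_le_ncard hD
  have := Set.ncard_insert_le x (A \ s ∪ T)
  have := Set.ncard_union_le (A \ s) T
  omega

lemma isDomSet_insert_diff_union_inter_of_dominates {G : SimpleGraph V} (x : V) {A1 A2 : Set V}
    (hA1 : ∀ v ∉ A1 ∪ A2, ∃ u ∈ A1, G.Adj u v) :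
    IsDomSet G (insert x ((A1 ∪ A2) \ closedNbhd G x ∪ A1 ∩ closedNbhd G x)) := by
  refine isDomSet_insert_diff_union fun v hvA _ => ?_
  obtain ⟨u, hu, huv⟩ := hA1 v hvA
  by_cases huX : u ∈ closedNbhd G x
  · exact ⟨u, Or.inr ⟨hu, huX⟩, huv⟩
  · exact ⟨u, Or.inl ⟨Or.inl hu, huX⟩, huv⟩

lemma isDomSet_insert_diff_union_image_of_dominates {G : SimpleGraph V} {x : V} {A1 A2 : Set V}
    {π : Equiv.Perm V} (hfix : ∀ w ∉ closedNbhd G x, π w = w)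
    (hB2 : ∀ v ∉ π '' (A1 ∪ A2), ∃ u ∈ π '' A2, G.Adj u v) :
    IsDomSet G (insert x ((A1 ∪ A2) \ closedNbhd G x ∪ π '' (A2 ∩ closedNbhd G x))) := by
  refine isDomSet_insert_diff_union fun v hvA hvX => ?_
  have hvπA : v ∉ π '' (A1 ∪ A2) := fun hv =>
    match image_subset_image_inter_union_diff hfix hv with
    | Or.inl ⟨a, ⟨_, haX⟩, hav⟩ => hvX (hav ▸ π.apply_mem_of_forall_notMem_fixed hfix haX)
    | Or.inr ⟨hv, _⟩ => hvA hv
  obtain ⟨u, hu, huv⟩ := hB2 v hvπA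
  refine ⟨u, ?_, huv⟩
  rcases image_subset_image_inter_union_diff hfix hu with hu | ⟨hu, huX⟩
  · exact Or.inr hu
  · exact Or.inl ⟨Or.inr hu, huX⟩

/-- a dominating set meets every closed neighborhood, and consequently an
effective separable γ-set meets `X = N[x]` in exactly 1 or 2 vertices. -/
theorem dom_meets_closedNbhd_and_card [Fintype V] (G : SimpleGraph V) (x : V)
    (A1 A2 : Set V) (hdom : IsDomSet G (A1 ∪ A2)) :
    ((A1 ∪ A2) ∩ closedNbhd G x).Nonempty ∧
    (C3Free G x → SepGammaSet G A1 A2 →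
      ∀ π : Equiv.Perm V, (∀ w ∉ closedNbhd G x, π w = w) →
        (∀ w ∈ closedNbhd G x, π w ≠ w) →
        (∀ u ∈ closedNbhd G x, ∀ w ∈ closedNbhd G x, π w = u → π u ≠ w) →
        Effective G π A1 A2 →
        ((A1 ∪ A2) ∩ closedNbhd G x).ncard = 1 ∨
          ((A1 ∪ A2) ∩ closedNbhd G x).ncard = 2) := by
  have hmeet := hdom.inter_closedNbhd_nonempty x
  refine ⟨hmeet, ?_⟩
  rintro - ⟨-, -, hdisj, -, hγ, hA1⟩ π hfix - - ⟨-, -, hB2⟩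
  have hsplit : ((A1 ∪ A2) ∩ closedNbhd G x).ncard =
      (A1 ∩ closedNbhd G x).ncard + (A2 ∩ closedNbhd G x).ncard := by
    rw [Set.union_inter_distrib_right]
    exact Set.ncard_union_eq (hdisj.mono Set.inter_subset_left Set.inter_subset_left)
  have hle1 := ncard_inter_le_of_isDomSet_insert (Set.toFinite _) hγ
    (isDomSet_insert_diff_union_inter_of_dominates x hA1)
  have hle2 := ncard_inter_le_of_isDomSet_insert (Set.toFinite _) hγ
    (isDomSet_insert_diff_union_image_of_dominates hfix hB2)
  rw [Set.ncard_image_of_injective _ π.injective] at hle2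
  have hpos := (Set.ncard_pos (Set.toFinite _)).2 hmeet
  omega
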